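/- Boundedness of negative fractional powers of 1 − Δ_h on l^p_h with logarithmic loss: Let d ≥ 1, α ∈ [0,1], 1 ≤ p ≤ ∞, and 0 < h ≤ 1. Then there exists a constant C > 0, depending only on d, such that for every f ∈ l^p_h, ‖(1 − Δ_h)^{−α} f‖_{l^p_h} ≤ C (1 + |ln h|)^{dα} ‖f‖_{l^p_h}, where (1 − Δ_h)^{−α} is the Fourier multiplier operator with symbol M(ξ)^{−α}. -/

import Mathlib

noncomputable section

open scoped ENNReal Real
open MeasureTheory

/-- The integer lattice indexing `hℤ^d` (the point `k ∈ hℤ^d` corresponds to `h • k`). -/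
abbrev ZLat (d : ℕ) := Fin d → ℤ

/-- The fundamental domain `I_h = [0, 2π/h]^d` of the dual torus. -/
def fourierBox (d : ℕ) (h : ℝ) : Set (Fin d → ℝ) :=
  Set.univ.pi fun _ : Fin d => Set.Icc 0 (2 * π / h)

/-- The Fourier symbol `M(ξ) = 1 + 4h⁻² Σ_j sin²(hξ_j/2)` of the operator `1 − Δ_h`. -/
def Msymb (d : ℕ) (h : ℝ) (ξ : Fin d → ℝ) : ℝ :=
  1 + 4 / h ^ 2 * ∑ j : Fin d, Real.sin (h * ξ j / 2) ^ 2

/-- The kernel `K_k = (h/(2π))^d ∫_{I_h} m(ξ) e^{i (hk)·ξ} dξ` of the Fourier multiplier with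
symbol `m`; the lattice point `k : ZLat d` corresponds to `h k ∈ hℤ^d`. -/
def multKernel (d : ℕ) (h : ℝ) (m : (Fin d → ℝ) → ℂ) (k : ZLat d) : ℂ :=
  ((h / (2 * π)) ^ d : ℝ) *
    ∫ ξ in fourierBox d h,
      m ξ * Complex.exp (Complex.I * ((h * ∑ j : Fin d, (k j : ℝ) * ξ j : ℝ) : ℂ))

/-- The Fourier multiplier operator with symbol `m`, i.e. convolution with the kernel
`multKernel d h m`, so that the discrete Fourier transform of `multOp d h m f` is `m · f̂`. -/
def multOp (d : ℕ) (h : ℝ) (m : (Fin d → ℝ) → ℂ) (f : ZLat d → ℂ) : ZLat d → ℂ :=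
  fun n => ∑' k : ZLat d, f k * multKernel d h m (n - k)

/-!
Write `B = (h² + 4d)/h²`. Since `sin² = 1 - cos²`, `M = B (1 - W)` where
`W(ξ) = 4/(h² + 4d) ∑_j cos²(hξ_j/2)` is a trigonometric polynomial with nonnegative coefficients
and total mass `W(0) = 4d/(h² + 4d) < 1`. For `α ≥ 0` the binomial coefficients in
`M^{-α} = B^{-α} ∑_n binom(α+n-1, n) W^n` are nonnegative, so the kernel of `(1 - Δ_h)^{-α}` is
nonnegative, with total mass `B^{-α} (1 - W(0))^{-α} = M(0)^{-α} = 1`. Convolution with such a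
kernel is a contraction on every `l^p_h` (Young), so the estimate holds with `C = 1`.
-/

lemma Ring.choose_add_sub_one_nonneg {a : ℝ} (ha : 0 ≤ a) (n : ℕ) :
    0 ≤ Ring.choose (a + n - 1) n := by
  have h := Ring.factorial_nsmul_multichoose_eq_ascPochhammer a n
  rw [Ring.multichoose_eq, Polynomial.ascPochhammer_smeval_eq_eval, nsmul_eq_mul] at h
  have hpoch : 0 ≤ (ascPochhammer ℝ n).eval a := by
    rcases ha.eq_or_lt with rfl | ha
    · rw [ascPochhammer_eval_zero]; split_ifs <;> norm_num
    · exact (ascPochhammer_pos n a ha).le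
  rw [← h] at hpoch
  exact nonneg_of_mul_nonneg_right hpoch (by positivity)

lemma hasSum_choose_mul_pow_one_sub_rpow_neg (a : ℝ) {x : ℝ} (hx : |x| < 1) :
    HasSum (fun n : ℕ => Ring.choose (a + n - 1) n * x ^ n) ((1 - x) ^ (-a)) := by
  have hx' : x ∈ Metric.eball (0 : ℝ) 1 := by
    rw [Metric.mem_eball, edist_zero_right, enorm_eq_nnnorm, ← ENNReal.coe_one, ENNReal.coe_lt_coe,
      ← NNReal.coe_lt_coe, coe_nnnorm, Real.norm_eq_abs, NNReal.coe_one]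
    exact hx
  have h := (Real.one_div_one_sub_rpow_hasFPowerSeriesOnBall_zero a).hasSum hx'
  simp only [FormalMultilinearSeries.ofScalars_apply_eq, smul_eq_mul, zero_add] at h
  rwa [Real.rpow_neg (by linarith [le_abs_self x]), ← one_div]

lemma hasSum_tsum_swap_of_nonneg {β γ : Type*} {f : β → γ → ℝ} (hf : ∀ b c, 0 ≤ f b c)
    {g : β → ℝ} (hg : ∀ b, HasSum (f b) (g b)) {a : ℝ} (ha : HasSum g a) :
    HasSum (fun c => ∑' b, f b c) a := by
  have hprod : Summable fun p : β × γ => f p.1 p.2 :=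
    (summable_prod_of_nonneg fun p => hf p.1 p.2).mpr
      ⟨fun b => (hg b).summable, by simpa only [(hg _).tsum_eq] using ha.summable⟩
  have hprod_sum : HasSum (fun p : β × γ => f p.1 p.2) a :=
    ha.unique (hprod.hasSum.prod_fiberwise hg) ▸ hprod.hasSum
  have hswap : HasSum (fun q : γ × β => f q.2 q.1) a :=
    (Equiv.prodComm γ β).hasSum_iff.mpr hprod_sum
  exact hswap.prod_fiberwise fun c => (hswap.summable.prod_factor c).hasSum

section Convolution

variable {p : ℝ≥0∞} [Fact (1 ≤ p)]

lemma Memℓp.comp_equiv {α β E : Type*} [NormedAddCommGroup E] {f : β → E} (hf : Memℓp f p)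
    (e : α ≃ β) : Memℓp (f ∘ e) p := by
  rcases eq_or_ne p ∞ with rfl | hp
  · refine memℓp_infty ?_
    change BddAbove (Set.range ((fun b => ‖f b‖) ∘ e))
    rw [Set.range_comp (fun b => ‖f b‖) e, e.range_eq_univ, Set.image_univ]
    exact memℓp_infty_iff.mp hf
  · have hp₀ : 0 < p.toReal := ENNReal.toReal_pos (zero_lt_one.trans_le Fact.out).ne' hp
    exact memℓp_gen ((e.summable_iff (f := fun b => ‖f b‖ ^ p.toReal)).mpr (hf.summable hp₀))

lemma lp.norm_comp_equiv {α β E : Type*} [NormedAddCommGroup E] (f : lp (fun _ : β => E) p)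
    (e : α ≃ β) :
    ‖(⟨⇑f ∘ e, (lp.memℓp f).comp_equiv e⟩ : lp (fun _ : α => E) p)‖ = ‖f‖ := by
  rcases eq_or_ne p ∞ with rfl | hp
  · rw [lp.norm_eq_ciSup, lp.norm_eq_ciSup]
    exact e.iSup_comp (g := fun b => ‖f b‖)
  · have hp₀ : 0 < p.toReal := ENNReal.toReal_pos (zero_lt_one.trans_le Fact.out).ne' hp
    rw [lp.norm_eq_tsum_rpow hp₀, lp.norm_eq_tsum_rpow hp₀]
    exact congrArg (· ^ (1 / p.toReal)) (e.tsum_eq fun b => ‖f b‖ ^ p.toReal)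

/-- Young's inequality `‖K * f‖_p ≤ ‖K‖₁ ‖f‖_p`, with `K * f` realised as the absolutely
convergent `ℓ^p`-valued series `∑ⱼ K(j) f(· - j)` of translates of `f`. -/
lemma exists_memℓp_conv_norm_le {G : Type*} [AddCommGroup G] (f : lp (fun _ : G => ℂ) p)
    {K : G → ℂ} (hK : Summable fun k => ‖K k‖) :
    ∃ hm : Memℓp (fun n => ∑' k, f k * K (n - k)) p,
      ‖(⟨_, hm⟩ : lp (fun _ : G => ℂ) p)‖ ≤ (∑' k, ‖K k‖) * ‖f‖ := by
  let τ : G → lp (fun _ : G => ℂ) p := fun j =>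
    ⟨⇑f ∘ Equiv.subRight j, (lp.memℓp f).comp_equiv _⟩
  have hterm : ∀ j, ‖K j • τ j‖ = ‖K j‖ * ‖f‖ := fun j => by
    rw [norm_smul, lp.norm_comp_equiv]
  have hsum : Summable fun j => ‖K j • τ j‖ := by
    simpa only [hterm] using hK.mul_right ‖f‖
  have hconv : ⇑(∑' j, K j • τ j) = fun n => ∑' k, f k * K (n - k) := by
    funext n
    have := (lp.evalCLM ℂ (fun _ : G => ℂ) p n).map_tsum hsum.of_norm
    change (∑' j, K j • τ j) n = _ at this
    rw [this, ← (Equiv.subLeft n).tsum_eq (fun k => f k * K (n - k))]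
    refine tsum_congr fun j => ?_
    change K j * f (n - j) = f (n - j) * K (n - (n - j))
    rw [sub_sub_cancel, mul_comm]
  refine ⟨hconv ▸ lp.memℓp _, ?_⟩
  calc ‖(⟨_, hconv ▸ lp.memℓp _⟩ : lp (fun _ : G => ℂ) p)‖ = ‖∑' j, K j • τ j‖ := by
        congr 1
        exact Subtype.ext hconv.symm
    _ ≤ ∑' j, ‖K j • τ j‖ := norm_tsum_le_tsum_norm hsum
    _ = (∑' k, ‖K k‖) * ‖f‖ := by simp_rw [hterm, tsum_mul_right]

end Convolution

lemma AddMonoidAlgebra.coeff_mul_nonneg {G : Type*} [AddGroup G] {P Q : AddMonoidAlgebra ℝ G}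
    (hP : ∀ k, 0 ≤ P.coeff k) (hQ : ∀ k, 0 ≤ Q.coeff k) (k : G) : 0 ≤ (P * Q).coeff k := by
  rw [AddMonoidAlgebra.coeff_mul_apply_left]
  exact Finset.sum_nonneg fun i _ => mul_nonneg (hP i) (hQ _)

lemma AddMonoidAlgebra.coeff_pow_nonneg {G : Type*} [AddGroup G] {P : AddMonoidAlgebra ℝ G}
    (hP : ∀ k, 0 ≤ P.coeff k) (n : ℕ) (k : G) : 0 ≤ (P ^ n).coeff k := by
  induction n generalizing k with
  | zero =>
    classical
    rw [pow_zero, AddMonoidAlgebra.one_def, AddMonoidAlgebra.coeff_single, Finsupp.single_apply]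
    split_ifs <;> norm_num
  | succ n ih => exact coeff_mul_nonneg ih hP k

section LatticeCharacters

variable {d : ℕ} {h : ℝ}

def latticeChar (d : ℕ) (h : ℝ) (k : ZLat d) (ξ : Fin d → ℝ) : ℂ :=
  Complex.exp (Complex.I * ((h * ∑ j : Fin d, (k j : ℝ) * ξ j : ℝ) : ℂ))

lemma latticeChar_eq_prod (k : ZLat d) (ξ : Fin d → ℝ) :
    latticeChar d h k ξ = ∏ j, Complex.exp (Complex.I * ((h * k j * ξ j : ℝ) : ℂ)) := by
  rw [latticeChar, ← Complex.exp_sum, Finset.mul_sum, Complex.ofReal_sum, Finset.mul_sum]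
  simp only [mul_assoc]

lemma latticeChar_zero (ξ : Fin d → ℝ) : latticeChar d h 0 ξ = 1 := by
  simp [latticeChar]

lemma latticeChar_add (k k' : ZLat d) (ξ : Fin d → ℝ) :
    latticeChar d h (k + k') ξ = latticeChar d h k ξ * latticeChar d h k' ξ := by
  simp only [latticeChar_eq_prod, ← Finset.prod_mul_distrib, ← Complex.exp_add]
  refine Finset.prod_congr rfl fun j _ => ?_
  rw [Pi.add_apply]
  push_cast
  ring_nf

lemma norm_latticeChar (k : ZLat d) (ξ : Fin d → ℝ) : ‖latticeChar d h k ξ‖ = 1 := by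
  rw [latticeChar, mul_comm, Complex.norm_exp_ofReal_mul_I]

lemma continuous_latticeChar (k : ZLat d) : Continuous (latticeChar d h k) := by
  unfold latticeChar
  fun_prop

lemma isCompact_fourierBox (d : ℕ) (h : ℝ) : IsCompact (fourierBox d h) :=
  isCompact_univ_pi fun _ => isCompact_Icc

lemma integral_exp_I_mul_int (hh : 0 < h) (n : ℤ) :
    ∫ t in Set.Icc 0 (2 * π / h), Complex.exp (Complex.I * ((h * n * t : ℝ) : ℂ)) =
      if n = 0 then ((2 * π / h : ℝ) : ℂ) else 0 := by
  rw [integral_Icc_eq_integral_Ioc, ← intervalIntegral.integral_of_le (by positivity)]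
  split_ifs with hn
  · simp [hn]
  have hc : Complex.I * h * n ≠ 0 := by simp [Complex.I_ne_zero, hh.ne', hn]
  simp_rw [show ∀ t : ℝ, Complex.I * ((h * n * t : ℝ) : ℂ) = Complex.I * h * n * t by
    intro t; push_cast; ring]
  rw [integral_exp_mul_complex hc]
  have hperiod : Complex.I * h * n * ((2 * π / h : ℝ) : ℂ) = n * (2 * π * Complex.I) := by
    have : (h : ℂ) ≠ 0 := Complex.ofReal_ne_zero.mpr hh.ne'
    push_cast
    field_simp
  rw [hperiod, Complex.exp_int_mul_two_pi_mul_I]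
  simp

lemma integral_latticeChar (hh : 0 < h) (k : ZLat d) :
    ∫ ξ in fourierBox d h, latticeChar d h k ξ =
      if k = 0 then (((2 * π / h) ^ d : ℝ) : ℂ) else 0 := by
  simp_rw [fourierBox, volume_pi, Measure.restrict_pi_pi, latticeChar_eq_prod]
  rw [integral_fintype_prod_eq_prod (fun j (t : ℝ) =>
    Complex.exp (Complex.I * ((h * k j * t : ℝ) : ℂ)))]
  simp_rw [integral_exp_I_mul_int hh]
  split_ifs with hk
  · simp [hk, div_pow]
  · obtain ⟨j, hj⟩ := Function.ne_iff.mp hk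
    exact Finset.prod_eq_zero (Finset.mem_univ j) (if_neg hj)

end LatticeCharacters

section TrigonometricPolynomials

variable {d : ℕ} {h : ℝ}

/-- Elements `P` of the group algebra `ℝ[ℤ^d]` are read as trigonometric polynomials
`ξ ↦ ∑ₖ P(k) e^{i (hk)·ξ}` on the dual torus. -/
def trigEval (d : ℕ) (h : ℝ) (ξ : Fin d → ℝ) : AddMonoidAlgebra ℝ (ZLat d) →ₐ[ℝ] ℂ :=
  AddMonoidAlgebra.lift ℝ ℂ (ZLat d)
    { toFun := fun k => latticeChar d h k.toAdd ξ
      map_one' := latticeChar_zero ξ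
      map_mul' := fun k k' => latticeChar_add k.toAdd k'.toAdd ξ }

def totalMass (d : ℕ) : AddMonoidAlgebra ℝ (ZLat d) →ₐ[ℝ] ℝ :=
  AddMonoidAlgebra.lift ℝ ℝ (ZLat d) 1

lemma trigEval_apply (ξ : Fin d → ℝ) (P : AddMonoidAlgebra ℝ (ZLat d)) :
    trigEval d h ξ P = ∑ k ∈ P.coeff.support, (P.coeff k : ℂ) * latticeChar d h k ξ := by
  simp only [trigEval, AddMonoidAlgebra.lift_apply, Finsupp.sum, Complex.real_smul]
  rfl

lemma totalMass_apply (P : AddMonoidAlgebra ℝ (ZLat d)) :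
    totalMass d P = ∑ k ∈ P.coeff.support, P.coeff k := by
  simp [totalMass, AddMonoidAlgebra.lift_apply, Finsupp.sum]

lemma trigEval_single (ξ : Fin d → ℝ) (k : ZLat d) (r : ℝ) :
    trigEval d h ξ (AddMonoidAlgebra.single k r) = r * latticeChar d h k ξ := by
  rw [trigEval, AddMonoidAlgebra.lift_single, Complex.real_smul]
  rfl

lemma totalMass_single (k : ZLat d) (r : ℝ) : totalMass d (AddMonoidAlgebra.single k r) = r := by
  simp [totalMass]

lemma continuous_trigEval (P : AddMonoidAlgebra ℝ (ZLat d)) :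
    Continuous fun ξ => trigEval d h ξ P := by
  simp_rw [trigEval_apply]
  exact continuous_finsetSum _ fun k _ => continuous_const.mul (continuous_latticeChar k)

lemma norm_trigEval_le {P : AddMonoidAlgebra ℝ (ZLat d)} (hP : ∀ k, 0 ≤ P.coeff k)
    (ξ : Fin d → ℝ) : ‖trigEval d h ξ P‖ ≤ totalMass d P := by
  rw [trigEval_apply, totalMass_apply]
  refine (norm_sum_le _ _).trans (Finset.sum_le_sum fun k _ => ?_)
  rw [norm_mul, norm_latticeChar, mul_one, Complex.norm_real, Real.norm_of_nonneg (hP k)]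

lemma hasSum_coeff_neg (P : AddMonoidAlgebra ℝ (ZLat d)) :
    HasSum (fun k => P.coeff (-k)) (totalMass d P) := by
  rw [totalMass_apply]
  exact (Equiv.neg (ZLat d)).hasSum_iff.mpr
    (hasSum_sum_of_ne_finset_zero fun k hk => Finsupp.notMem_support_iff.mp hk)

lemma integral_trigEval_mul_latticeChar (hh : 0 < h) (P : AddMonoidAlgebra ℝ (ZLat d))
    (k : ZLat d) :
    ∫ ξ in fourierBox d h, trigEval d h ξ P * latticeChar d h k ξ =
      (((2 * π / h) ^ d : ℝ) : ℂ) * P.coeff (-k) := by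
  simp_rw [trigEval_apply, Finset.sum_mul, mul_assoc, ← latticeChar_add]
  rw [integral_finsetSum _ fun i _ =>
    ((continuous_latticeChar _).const_mul _).continuousOn.integrableOn_compact
      (isCompact_fourierBox d h)]
  simp_rw [integral_const_mul, integral_latticeChar hh, add_eq_zero_iff_eq_neg, mul_ite, mul_zero]
  rw [Finset.sum_ite_eq']
  split_ifs with hk
  · ring
  · simp [Finsupp.notMem_support_iff.mp hk]

end TrigonometricPolynomials

section DiscreteLaplacianSymbol

variable {d : ℕ} {h : ℝ}

def cosSqPoly (j : Fin d) : AddMonoidAlgebra ℝ (ZLat d) :=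
  AddMonoidAlgebra.single 0 (1 / 2) + AddMonoidAlgebra.single (Pi.single j 1) (1 / 4) +
    AddMonoidAlgebra.single (-Pi.single j 1) (1 / 4)

lemma coeff_cosSqPoly_nonneg (j : Fin d) (k : ZLat d) : 0 ≤ (cosSqPoly j).coeff k := by
  simp only [cosSqPoly, AddMonoidAlgebra.coeff_add, AddMonoidAlgebra.coeff_single,
    Finsupp.add_apply, Finsupp.single_apply]
  split_ifs <;> norm_num

lemma totalMass_cosSqPoly (j : Fin d) : totalMass d (cosSqPoly j) = 1 := by
  simp only [cosSqPoly, map_add, totalMass_single]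
  norm_num

lemma trigEval_cosSqPoly (ξ : Fin d → ℝ) (j : Fin d) :
    trigEval d h ξ (cosSqPoly j) = (Real.cos (h * ξ j / 2) ^ 2 : ℝ) := by
  have hpos : latticeChar d h (Pi.single j 1) ξ = Complex.exp (↑(h * ξ j) * Complex.I) := by
    simp [latticeChar, Pi.single_apply, mul_comm]
  have hneg : latticeChar d h (-Pi.single j 1) ξ = Complex.exp (-↑(h * ξ j) * Complex.I) := by
    simp [latticeChar, Pi.single_apply, mul_comm]
  simp only [cosSqPoly, map_add, trigEval_single, latticeChar_zero, hpos, hneg]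
  rw [Complex.ofReal_pow, Complex.ofReal_cos, Complex.cos_sq, Complex.cos]
  push_cast
  ring_nf

/-- The trigonometric polynomial `W` of `M = B (1 - W)`, `B = (h² + 4d)/h²`. -/
def symbolWeight (d : ℕ) (h : ℝ) : AddMonoidAlgebra ℝ (ZLat d) :=
  (4 / (h ^ 2 + 4 * d)) • ∑ j, cosSqPoly j

lemma coeff_symbolWeight_nonneg (k : ZLat d) : 0 ≤ (symbolWeight d h).coeff k := by
  rw [symbolWeight, AddMonoidAlgebra.coeff_smul_apply, AddMonoidAlgebra.coeff_sum,
    Finset.sum_apply']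
  exact smul_nonneg (by positivity) (Finset.sum_nonneg fun j _ => coeff_cosSqPoly_nonneg j k)

lemma totalMass_symbolWeight : totalMass d (symbolWeight d h) = 4 * d / (h ^ 2 + 4 * d) := by
  simp only [symbolWeight, map_smul, map_sum, totalMass_cosSqPoly, Finset.sum_const,
    Finset.card_univ, Fintype.card_fin, smul_eq_mul, nsmul_eq_mul, mul_one]
  ring

lemma trigEval_symbolWeight (ξ : Fin d → ℝ) :
    trigEval d h ξ (symbolWeight d h) =
      (4 / (h ^ 2 + 4 * d) * ∑ j, Real.cos (h * ξ j / 2) ^ 2 : ℝ) := by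
  simp only [symbolWeight, map_smul, map_sum, trigEval_cosSqPoly, Complex.real_smul]
  push_cast
  rfl

lemma Msymb_eq (hh : h ≠ 0) (ξ : Fin d → ℝ) :
    Msymb d h ξ = (h ^ 2 + 4 * d) / h ^ 2 *
      (1 - 4 / (h ^ 2 + 4 * d) * ∑ j, Real.cos (h * ξ j / 2) ^ 2) := by
  have hsum : ∑ j, Real.sin (h * ξ j / 2) ^ 2 = d - ∑ j, Real.cos (h * ξ j / 2) ^ 2 := by
    simp [Real.sin_sq, Finset.sum_sub_distrib]
  have : h ^ 2 + 4 * (d : ℝ) ≠ 0 := by positivity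
  rw [Msymb, hsum]
  field_simp
  ring

end DiscreteLaplacianSymbol

section NegativePowerSeries

variable {d : ℕ} {h α : ℝ}

def negPowTerm (d : ℕ) (h α : ℝ) (n : ℕ) : AddMonoidAlgebra ℝ (ZLat d) :=
  (((h ^ 2 + 4 * d) / h ^ 2) ^ (-α) * Ring.choose (α + n - 1) n) • symbolWeight d h ^ n

lemma coeff_negPowTerm_nonneg (hα : 0 ≤ α) (n : ℕ) (k : ZLat d) :
    0 ≤ (negPowTerm d h α n).coeff k := by
  rw [negPowTerm, AddMonoidAlgebra.coeff_smul_apply, smul_eq_mul]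
  exact mul_nonneg (mul_nonneg (by positivity) (Ring.choose_add_sub_one_nonneg hα n))
    (AddMonoidAlgebra.coeff_pow_nonneg coeff_symbolWeight_nonneg n k)

lemma hasSum_binomial_mul_one_sub_rpow_neg (hh : 0 < h) (α : ℝ) {x : ℝ} (hx₀ : 0 ≤ x)
    (hx : x ≤ 4 * d / (h ^ 2 + 4 * d)) :
    HasSum (fun n : ℕ => ((h ^ 2 + 4 * d) / h ^ 2) ^ (-α) * Ring.choose (α + n - 1) n * x ^ n)
      (((h ^ 2 + 4 * d) / h ^ 2 * (1 - x)) ^ (-α)) := by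
  have hx₁ : x < 1 := hx.trans_lt <| (div_lt_one (by positivity)).mpr (by nlinarith)
  simp_rw [mul_assoc]
  rw [Real.mul_rpow (by positivity) (by linarith)]
  exact (hasSum_choose_mul_pow_one_sub_rpow_neg α (abs_lt.mpr ⟨by linarith, hx₁⟩)).mul_left _

lemma hasSum_trigEval_negPowTerm (hh : 0 < h) (α : ℝ) (ξ : Fin d → ℝ) :
    HasSum (fun n => trigEval d h ξ (negPowTerm d h α n)) ((Msymb d h ξ ^ (-α) : ℝ) : ℂ) := by
  have hcos : ∑ j, Real.cos (h * ξ j / 2) ^ 2 ≤ d := by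
    simpa using Finset.sum_le_sum fun j (_ : j ∈ Finset.univ) => Real.cos_sq_le_one (h * ξ j / 2)
  have hx : 4 / (h ^ 2 + 4 * d) * ∑ j, Real.cos (h * ξ j / 2) ^ 2 ≤ 4 * d / (h ^ 2 + 4 * d) := by
    rw [div_mul_eq_mul_div]
    gcongr
  rw [Msymb_eq hh.ne']
  refine (Complex.hasSum_ofReal.mpr
    (hasSum_binomial_mul_one_sub_rpow_neg hh α (by positivity) hx)).congr_fun fun n => ?_
  simp [negPowTerm, map_pow, trigEval_symbolWeight]

lemma hasSum_totalMass_negPowTerm (hh : 0 < h) (α : ℝ) :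
    HasSum (fun n => totalMass d (negPowTerm d h α n)) 1 := by
  have hB : (h ^ 2 + 4 * d) / h ^ 2 * (1 - 4 * d / (h ^ 2 + 4 * d)) = 1 := by
    field_simp
    ring
  convert hasSum_binomial_mul_one_sub_rpow_neg (d := d) hh α (by positivity) le_rfl using 1
  · ext n
    simp [negPowTerm, map_pow, totalMass_symbolWeight]
  · rw [hB, Real.one_rpow]

end NegativePowerSeries

section KernelOfSeries

variable {d : ℕ} {h : ℝ}

lemma multKernel_tsum_trigEval (hh : 0 < h) {Q : ℕ → AddMonoidAlgebra ℝ (ZLat d)}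
    (hQ : ∀ n k, 0 ≤ (Q n).coeff k) (hsum : Summable fun n => totalMass d (Q n)) (k : ZLat d) :
    multKernel d h (fun ξ => ∑' n, trigEval d h ξ (Q n)) k =
      ((∑' n, (Q n).coeff (-k) : ℝ) : ℂ) := by
  set F : ℕ → (Fin d → ℝ) → ℂ := fun n ξ => trigEval d h ξ (Q n) * latticeChar d h k ξ
  have hF_int : ∀ n, IntegrableOn (F n) (fourierBox d h) := fun n =>
    ((continuous_trigEval (Q n)).mul (continuous_latticeChar k)).continuousOn.integrableOn_compact
      (isCompact_fourierBox d h)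
  have hF_norm : ∀ n, ∫ ξ in fourierBox d h, ‖F n ξ‖ ≤
      totalMass d (Q n) * volume.real (fourierBox d h) := fun n =>
    (le_abs_self _).trans <| norm_setIntegral_le_of_norm_le_const (f := fun ξ => ‖F n ξ‖)
      (isCompact_fourierBox d h).measure_lt_top fun ξ _ => by
        rw [norm_norm, norm_mul, norm_latticeChar, mul_one]
        exact norm_trigEval_le (hQ n) ξ
  have hF_sum : Summable fun n => ∫ ξ in fourierBox d h, ‖F n ξ‖ :=
    (hsum.mul_right _).of_nonneg_of_le (fun n => integral_nonneg fun _ => norm_nonneg _) hF_norm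
  have hscale : (((h / (2 * π)) ^ d : ℝ) : ℂ) * (((2 * π / h) ^ d : ℝ) : ℂ) = 1 := by
    rw [← Complex.ofReal_mul, ← mul_pow, div_mul_div_comm, mul_comm h, div_self (by positivity),
      one_pow, Complex.ofReal_one]
  calc multKernel d h (fun ξ => ∑' n, trigEval d h ξ (Q n)) k
      = (((h / (2 * π)) ^ d : ℝ) : ℂ) * ∫ ξ in fourierBox d h, ∑' n, F n ξ := by
        simp_rw [multKernel, F, tsum_mul_right]
        rfl
    _ = (((h / (2 * π)) ^ d : ℝ) : ℂ) * ∑' n, ∫ ξ in fourierBox d h, F n ξ := by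
        rw [integral_tsum_of_summable_integral_norm hF_int hF_sum]
    _ = ((∑' n, (Q n).coeff (-k) : ℝ) : ℂ) := by
        simp_rw [F, integral_trigEval_mul_latticeChar hh, tsum_mul_left, ← mul_assoc, hscale,
          one_mul, Complex.ofReal_tsum]

end KernelOfSeries

lemma multKernel_Msymb_rpow_neg {d : ℕ} {h α : ℝ} (hh : 0 < h) (hα : 0 ≤ α) (k : ZLat d) :
    multKernel d h (fun ξ => ((Msymb d h ξ ^ (-α) : ℝ) : ℂ)) k =
      ((∑' n, (negPowTerm d h α n).coeff (-k) : ℝ) : ℂ) := by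
  simp_rw [← (hasSum_trigEval_negPowTerm hh α _).tsum_eq]
  exact multKernel_tsum_trigEval hh (coeff_negPowTerm_nonneg hα)
    (hasSum_totalMass_negPowTerm hh α).summable k

lemma hasSum_norm_multKernel_Msymb_rpow_neg {d : ℕ} {h α : ℝ} (hh : 0 < h) (hα : 0 ≤ α) :
    HasSum (fun k => ‖multKernel d h (fun ξ => ((Msymb d h ξ ^ (-α) : ℝ) : ℂ)) k‖) 1 := by
  simp_rw [multKernel_Msymb_rpow_neg hh hα, Complex.norm_real,
    Real.norm_of_nonneg (tsum_nonneg fun n => coeff_negPowTerm_nonneg hα n _)]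
  exact hasSum_tsum_swap_of_nonneg (fun n k => coeff_negPowTerm_nonneg hα n (-k))
    (fun n => hasSum_coeff_neg _) (hasSum_totalMass_negPowTerm hh α)

theorem one_sub_discLap_neg_rpow_bound_general (d : ℕ) :
    ∃ C : ℝ, 0 < C ∧
      ∀ (α : ℝ), 0 ≤ α → α ≤ 1 →
      ∀ (p : ℝ≥0∞) [Fact (1 ≤ p)],
      ∀ (h : ℝ), 0 < h → h ≤ 1 →
      ∀ f : lp (fun _ : ZLat d => ℂ) p,
        ∃ hm : Memℓp (multOp d h (fun ξ => ((Msymb d h ξ ^ (-α) : ℝ) : ℂ)) ⇑f) p,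
          ‖(⟨multOp d h (fun ξ => ((Msymb d h ξ ^ (-α) : ℝ) : ℂ)) ⇑f, hm⟩ :
              lp (fun _ : ZLat d => ℂ) p)‖
            ≤ C * (1 + |Real.log h|) ^ (d * α) * ‖f‖ := by
  refine ⟨1, one_pos, fun α hα _ p _ h hh _ f => ?_⟩
  have hK := hasSum_norm_multKernel_Msymb_rpow_neg (d := d) hh hα
  obtain ⟨hm, hnorm⟩ := exists_memℓp_conv_norm_le f hK.summable
  refine ⟨hm, hnorm.trans ?_⟩
  rw [hK.tsum_eq, one_mul, one_mul]
  exact le_mul_of_one_le_left (norm_nonneg f)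
    (Real.one_le_rpow (by linarith [abs_nonneg (Real.log h)]) (by positivity))

/-- **Boundedness of negative fractional powers of `1 − Δ_h` on `l^p_h` with logarithmic
loss:** there is `C > 0` depending only on `d` such that for all `α ∈ [0,1]`, `1 ≤ p ≤ ∞` and
`0 < h ≤ 1`, `‖(1 − Δ_h)^{−α} f‖_{l^p_h} ≤ C (1 + |ln h|)^{dα} ‖f‖_{l^p_h}`, where
`(1 − Δ_h)^{−α}` is the Fourier multiplier operator with symbol `M(ξ)^{−α}`. -/
theorem one_sub_discLap_neg_rpow_bound (d : ℕ) (hd : 1 ≤ d) :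
    ∃ C : ℝ, 0 < C ∧
      ∀ (α : ℝ), 0 ≤ α → α ≤ 1 →
      ∀ (p : ℝ≥0∞) [Fact (1 ≤ p)],
      ∀ (h : ℝ), 0 < h → h ≤ 1 →
      ∀ f : lp (fun _ : ZLat d => ℂ) p,
        ∃ hm : Memℓp (multOp d h (fun ξ => ((Msymb d h ξ ^ (-α) : ℝ) : ℂ)) ⇑f) p,
          ‖(⟨multOp d h (fun ξ => ((Msymb d h ξ ^ (-α) : ℝ) : ℂ)) ⇑f, hm⟩ :
              lp (fun _ : ZLat d => ℂ) p)‖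
            ≤ C * (1 + |Real.log h|) ^ (d * α) * ‖f‖ :=
  one_sub_discLap_neg_rpow_bound_general d
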